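/- Fix Heston parameters v > 0, κ > 0, θ > 0, ξ > 0, ρ ∈ (−1,1) with κ > ρξ, and t ≥ 0. Then: (a) B(0,τ) = B(1,τ) = 0 for every τ > 0; (b) for every u ∈ (0,1) and τ > 0, B(u,τ) < 0; (c) for every u ∈ (u₋, u₊) with u ∉ [0,1], the map τ ↦ B(u,τ) is strictly increasing on (0,∞); (d) for every u ∈ (u₋, u₊), lim_{τ→∞} B(u,τ) = (κ − ρξu − d(u))/ξ² = V(u)/(κθ); consequently, for every u ∈ (u₋, u₊) with 2β_t·V(u) < κθ, one has 2β_t·B(u,τ) < 1 for all τ > 0. -/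

import Mathlib

open Filter Topology Set Asymptotics

/-- `η := √(ξ²(1−ρ²) + (2κ−ρξ)²)`. -/
noncomputable def etaH (κ ξ ρ : ℝ) : ℝ :=
  Real.sqrt (ξ ^ 2 * (1 - ρ ^ 2) + (2 * κ - ρ * ξ) ^ 2)

/-- `u₋ := (ξ − 2κρ − η)/(2ξ(1−ρ²))`. -/
noncomputable def uMinusH (κ ξ ρ : ℝ) : ℝ :=
  (ξ - 2 * κ * ρ - etaH κ ξ ρ) / (2 * ξ * (1 - ρ ^ 2))

/-- `u₊ := (ξ − 2κρ + η)/(2ξ(1−ρ²))`. -/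
noncomputable def uPlusH (κ ξ ρ : ℝ) : ℝ :=
  (ξ - 2 * κ * ρ + etaH κ ξ ρ) / (2 * ξ * (1 - ρ ^ 2))

/-- `d(u) := √((κ − ρξu)² + u ξ² (1 − u))`. -/
noncomputable def dH (κ ξ ρ : ℝ) (u : ℝ) : ℝ :=
  Real.sqrt ((κ - ρ * ξ * u) ^ 2 + u * ξ ^ 2 * (1 - u))

/-- `γ(u) := (κ − ρξu − d(u))/(κ − ρξu + d(u))`. -/
noncomputable def gammaH (κ ξ ρ : ℝ) (u : ℝ) : ℝ :=
  (κ - ρ * ξ * u - dH κ ξ ρ u) / (κ - ρ * ξ * u + dH κ ξ ρ u)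

/-- `V(u) := (κθ/ξ²)(κ − ρξu − d(u))`. -/
noncomputable def VH (κ θ ξ ρ : ℝ) (u : ℝ) : ℝ :=
  κ * θ / ξ ^ 2 * (κ - ρ * ξ * u - dH κ ξ ρ u)

/-- `β_t := (ξ²/(4κ))(1 − e^{−κt})`. -/
noncomputable def betaT (κ ξ t : ℝ) : ℝ :=
  ξ ^ 2 / (4 * κ) * (1 - Real.exp (-κ * t))

/-- `A(u,τ) := (κθ/ξ²)[(κ − ρξu − d(u))τ − 2 log((1 − γ(u)e^{−d(u)τ})/(1 − γ(u)))]`. -/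
noncomputable def AH (κ θ ξ ρ : ℝ) (u τ : ℝ) : ℝ :=
  κ * θ / ξ ^ 2 * ((κ - ρ * ξ * u - dH κ ξ ρ u) * τ -
    2 * Real.log ((1 - gammaH κ ξ ρ u * Real.exp (-dH κ ξ ρ u * τ)) / (1 - gammaH κ ξ ρ u)))

/-- `B(u,τ) := ((κ − ρξu − d(u))/ξ²)(1 − e^{−d(u)τ})/(1 − γ(u)e^{−d(u)τ})`. -/
noncomputable def BH (κ ξ ρ : ℝ) (u τ : ℝ) : ℝ :=
  (κ - ρ * ξ * u - dH κ ξ ρ u) / ξ ^ 2 *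
    ((1 - Real.exp (-dH κ ξ ρ u * τ)) / (1 - gammaH κ ξ ρ u * Real.exp (-dH κ ξ ρ u * τ)))


/-! With `m = κ − ρξu` and `d = d(u)`, `B(u,τ) = (m − d)/ξ² · R(e^{−dτ})` where
`R(x) = (1 − x)/(1 − γx)`. For `γ < 1`, `R` decreases strictly on `[0,1]` from `R 0 = 1` to
`R 1 = 0`, so for `d > 0` the factor `τ ↦ R(e^{−dτ})` increases strictly from `0` towards `1`.
On `(u₋, u₊)` the radicand `d² = m² + uξ²(1 − u)` is positive, which together with `κ > ρξ`
forces `m > 0`; hence `d > 0` and `γ < 1`. The sign of `m − d` is the sign of `−u(1 − u)`. -/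

noncomputable def decayRatio (γ x : ℝ) : ℝ :=
  (1 - x) / (1 - γ * x)

section DecayRatio

variable {γ x : ℝ}

lemma one_sub_mul_pos_of_mem_Icc (hγ : γ < 1) (hx : x ∈ Icc (0 : ℝ) 1) : 0 < 1 - γ * x := by
  obtain ⟨hx0, hx1⟩ := hx
  rcases le_total γ 0 with h | h <;> nlinarith

lemma decayRatio_mem_Ioo (hγ : γ < 1) (hx0 : 0 < x) (hx1 : x < 1) :
    decayRatio γ x ∈ Ioo 0 1 := by
  have hden := one_sub_mul_pos_of_mem_Icc hγ ⟨hx0.le, hx1.le⟩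
  exact ⟨div_pos (sub_pos.2 hx1) hden, (div_lt_one hden).2 (by nlinarith)⟩

lemma strictAntiOn_decayRatio (hγ : γ < 1) : StrictAntiOn (decayRatio γ) (Icc 0 1) := by
  intro x hx y hy hxy
  rw [decayRatio, decayRatio,
    div_lt_div_iff₀ (one_sub_mul_pos_of_mem_Icc hγ hy) (one_sub_mul_pos_of_mem_Icc hγ hx)]
  nlinarith [mul_pos (sub_pos.2 hγ) (sub_pos.2 hxy)]

lemma tendsto_decayRatio_nhds_zero (γ : ℝ) : Tendsto (decayRatio γ) (𝓝 0) (𝓝 1) := by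
  have h : ContinuousAt (decayRatio γ) 0 := by
    unfold decayRatio
    exact (continuousAt_const.sub continuousAt_id).div
      (continuousAt_const.sub (continuousAt_const.mul continuousAt_id)) (by simp)
  simpa [decayRatio] using h.tendsto

end DecayRatio

section ExponentialDecay

variable {γ d : ℝ}

lemma exp_neg_mul_mem_Icc (hd : 0 ≤ d) {τ : ℝ} (hτ : 0 ≤ τ) :
    Real.exp (-d * τ) ∈ Icc (0 : ℝ) 1 :=
  ⟨(Real.exp_pos _).le, Real.exp_le_one_iff.2 (by nlinarith)⟩

lemma decayRatio_exp_mem_Ioo (hγ : γ < 1) (hd : 0 < d) {τ : ℝ} (hτ : 0 < τ) :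
    decayRatio γ (Real.exp (-d * τ)) ∈ Ioo 0 1 :=
  decayRatio_mem_Ioo hγ (Real.exp_pos _) (Real.exp_lt_one_iff.2 (by nlinarith))

lemma strictMonoOn_decayRatio_exp (hγ : γ < 1) (hd : 0 < d) :
    StrictMonoOn (fun τ => decayRatio γ (Real.exp (-d * τ))) (Ici 0) := by
  intro τ₁ h₁ τ₂ h₂ h₁₂
  have h : -d * τ₂ < -d * τ₁ := by nlinarith
  exact strictAntiOn_decayRatio hγ (exp_neg_mul_mem_Icc hd.le h₂)
    (exp_neg_mul_mem_Icc hd.le h₁) (Real.exp_lt_exp.2 h)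

lemma tendsto_decayRatio_exp_atTop (hd : 0 < d) :
    Tendsto (fun τ => decayRatio γ (Real.exp (-d * τ))) atTop (𝓝 1) := by
  have h : Tendsto (fun τ => Real.exp (-(d * τ))) atTop (𝓝 0) :=
    Real.tendsto_exp_neg_atTop_nhds_zero.comp (tendsto_id.const_mul_atTop hd)
  simp only [neg_mul]
  exact (tendsto_decayRatio_nhds_zero γ).comp h

end ExponentialDecay

section Heston

variable {κ ξ ρ u : ℝ}

lemma BH_eq_mul_decayRatio (τ : ℝ) :
    BH κ ξ ρ u τ = (κ - ρ * ξ * u - dH κ ξ ρ u) / ξ ^ 2 *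
      decayRatio (gammaH κ ξ ρ u) (Real.exp (-dH κ ξ ρ u * τ)) :=
  rfl

lemma VH_eq_mul (θ : ℝ) :
    VH κ θ ξ ρ u = κ * θ * ((κ - ρ * ξ * u - dH κ ξ ρ u) / ξ ^ 2) := by
  rw [VH]; ring

lemma BH_zero (hκ : 0 ≤ κ) (τ : ℝ) : BH κ ξ ρ 0 τ = 0 := by
  have hd : dH κ ξ ρ 0 = κ := by simp [dH, Real.sqrt_sq hκ]
  simp [BH, hd]

lemma BH_one (hκρξ : ρ * ξ ≤ κ) (τ : ℝ) : BH κ ξ ρ 1 τ = 0 := by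
  have hd : dH κ ξ ρ 1 = κ - ρ * ξ := by simp [dH, Real.sqrt_sq (sub_nonneg.2 hκρξ)]
  simp [BH, hd]

lemma radicand_pos_of_mem_Ioo (hξ : 0 < ξ) (hρ : ρ ^ 2 < 1)
    (hu : u ∈ Ioo (uMinusH κ ξ ρ) (uPlusH κ ξ ρ)) :
    0 < (κ - ρ * ξ * u) ^ 2 + u * ξ ^ 2 * (1 - u) := by
  obtain ⟨h₁, h₂⟩ := hu
  have hden : 0 < 2 * ξ * (1 - ρ ^ 2) := by nlinarith
  have hη : etaH κ ξ ρ ^ 2 = ξ ^ 2 * (1 - ρ ^ 2) + (2 * κ - ρ * ξ) ^ 2 :=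
    Real.sq_sqrt (by nlinarith [sq_nonneg (2 * κ - ρ * ξ)])
  rw [uMinusH, div_lt_iff₀ hden] at h₁
  rw [uPlusH, lt_div_iff₀ hden] at h₂
  have f₁ : 0 < etaH κ ξ ρ + (2 * ξ * (1 - ρ ^ 2) * u - (ξ - 2 * κ * ρ)) := by linarith
  have f₂ : 0 < etaH κ ξ ρ - (2 * ξ * (1 - ρ ^ 2) * u - (ξ - 2 * κ * ρ)) := by linarith
  nlinarith [mul_pos f₁ f₂, mul_pos hξ hξ]

lemma mul_sq_mul_one_sub_pos (hξ : ξ ≠ 0) (hu : u ∈ Ioo (0 : ℝ) 1) :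
    0 < u * ξ ^ 2 * (1 - u) :=
  mul_pos (mul_pos hu.1 (by positivity)) (sub_pos.2 hu.2)

lemma mul_sq_mul_one_sub_neg (hξ : ξ ≠ 0) (hu : u ∉ Icc (0 : ℝ) 1) :
    u * ξ ^ 2 * (1 - u) < 0 := by
  have hξ2 : 0 < ξ ^ 2 := by positivity
  rw [mem_Icc, not_and_or, not_le, not_le] at hu
  rcases hu with hu | hu
  · exact mul_neg_of_neg_of_pos (mul_neg_of_neg_of_pos hu hξ2) (by linarith)
  · exact mul_neg_of_pos_of_neg (mul_pos (by linarith) hξ2) (by linarith)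

lemma sub_mul_pos_of_radicand_pos (hκ : 0 < κ) (hρ : ρ ^ 2 < 1) (hκρξ : ρ * ξ < κ)
    (hQ : 0 < (κ - ρ * ξ * u) ^ 2 + u * ξ ^ 2 * (1 - u)) :
    0 < κ - ρ * ξ * u := by
  by_contra! h
  -- for the radicand `Q`, `ρ²Q + (ρξu − κ)G = −κ(κ − ρξ) < 0`, yet both summands are `≥ 0`
  have hG : 0 ≤ (1 - ρ ^ 2) * (ρ * ξ * u) + (1 + ρ ^ 2) * κ - ρ * ξ := by nlinarith
  nlinarith [mul_nonneg (sq_nonneg ρ) hQ.le, mul_nonneg (sub_nonneg.2 h) hG,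
    mul_pos hκ (sub_pos.2 hκρξ)]

lemma dH_pos (hQ : 0 < (κ - ρ * ξ * u) ^ 2 + u * ξ ^ 2 * (1 - u)) : 0 < dH κ ξ ρ u :=
  Real.sqrt_pos.2 hQ

lemma gammaH_lt_one (hκ : 0 < κ) (hρ : ρ ^ 2 < 1) (hκρξ : ρ * ξ < κ)
    (hQ : 0 < (κ - ρ * ξ * u) ^ 2 + u * ξ ^ 2 * (1 - u)) : gammaH κ ξ ρ u < 1 := by
  have hm := sub_mul_pos_of_radicand_pos hκ hρ hκρξ hQ
  have hd := dH_pos hQ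
  rw [gammaH, div_lt_one (by linarith)]
  linarith

lemma sub_dH_neg (hp : 0 < u * ξ ^ 2 * (1 - u)) : κ - ρ * ξ * u - dH κ ξ ρ u < 0 := by
  have : |κ - ρ * ξ * u| < dH κ ξ ρ u := by
    rw [← Real.sqrt_sq_eq_abs, dH]
    exact Real.sqrt_lt_sqrt (sq_nonneg _) (by linarith)
  linarith [le_abs_self (κ - ρ * ξ * u)]

lemma sub_dH_pos (hm : 0 < κ - ρ * ξ * u) (hp : u * ξ ^ 2 * (1 - u) < 0) :
    0 < κ - ρ * ξ * u - dH κ ξ ρ u := by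
  have : dH κ ξ ρ u < κ - ρ * ξ * u := (Real.sqrt_lt' hm).2 (by linarith)
  linarith

lemma BH_neg (hκ : 0 < κ) (hρ : ρ ^ 2 < 1) (hκρξ : ρ * ξ < κ) (hξ : ξ ≠ 0)
    (hu : u ∈ Ioo (0 : ℝ) 1) {τ : ℝ} (hτ : 0 < τ) : BH κ ξ ρ u τ < 0 := by
  have hp := mul_sq_mul_one_sub_pos hξ hu
  have hQ : 0 < (κ - ρ * ξ * u) ^ 2 + u * ξ ^ 2 * (1 - u) := by positivity
  rw [BH_eq_mul_decayRatio]
  exact mul_neg_of_neg_of_pos (div_neg_of_neg_of_pos (sub_dH_neg hp) (by positivity))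
    (decayRatio_exp_mem_Ioo (gammaH_lt_one hκ hρ hκρξ hQ) (dH_pos hQ) hτ).1

lemma strictMonoOn_BH (hκ : 0 < κ) (hρ : ρ ^ 2 < 1) (hκρξ : ρ * ξ < κ)
    (hQ : 0 < (κ - ρ * ξ * u) ^ 2 + u * ξ ^ 2 * (1 - u))
    (hp : u * ξ ^ 2 * (1 - u) < 0) : StrictMonoOn (BH κ ξ ρ u) (Ioi 0) := by
  have hξ : ξ ≠ 0 := by
    rintro rfl
    simp at hp
  have hc : 0 < (κ - ρ * ξ * u - dH κ ξ ρ u) / ξ ^ 2 :=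
    div_pos (sub_dH_pos (sub_mul_pos_of_radicand_pos hκ hρ hκρξ hQ) hp) (by positivity)
  intro τ₁ h₁ τ₂ h₂ h₁₂
  simp only [BH_eq_mul_decayRatio]
  exact mul_lt_mul_of_pos_left ((strictMonoOn_decayRatio_exp (gammaH_lt_one hκ hρ hκρξ hQ)
    (dH_pos hQ)) (Ioi_subset_Ici_self h₁) (Ioi_subset_Ici_self h₂) h₁₂) hc

lemma mul_BH_lt_one (hκ : 0 < κ) (hρ : ρ ^ 2 < 1) (hκρξ : ρ * ξ < κ)
    (hQ : 0 < (κ - ρ * ξ * u) ^ 2 + u * ξ ^ 2 * (1 - u)) {a : ℝ}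
    (ha : a * ((κ - ρ * ξ * u - dH κ ξ ρ u) / ξ ^ 2) < 1) {τ : ℝ} (hτ : 0 < τ) :
    a * BH κ ξ ρ u τ < 1 := by
  obtain ⟨hr₀, hr₁⟩ :=
    decayRatio_exp_mem_Ioo (gammaH_lt_one hκ hρ hκρξ hQ) (dH_pos hQ) hτ
  rw [BH_eq_mul_decayRatio, ← mul_assoc]
  -- `a c r < r < 1`, since `1 - a c > 0` and `r > 0`
  nlinarith [mul_pos (sub_pos.2 ha) hr₀]

lemma tendsto_BH_atTop (hQ : 0 < (κ - ρ * ξ * u) ^ 2 + u * ξ ^ 2 * (1 - u)) :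
    Tendsto (BH κ ξ ρ u) atTop (𝓝 ((κ - ρ * ξ * u - dH κ ξ ρ u) / ξ ^ 2)) := by
  have h := (tendsto_decayRatio_exp_atTop (γ := gammaH κ ξ ρ u) (dH_pos hQ)).const_mul
    ((κ - ρ * ξ * u - dH κ ξ ρ u) / ξ ^ 2)
  rw [mul_one] at h
  exact h

end Heston

theorem statement19_general (κ θ ξ ρ t : ℝ) (hκ : 0 < κ) (hθ : 0 < θ) (hξ : 0 < ξ)
    (hρ : ρ ∈ Set.Ioo (-1 : ℝ) 1) (hκρξ : ρ * ξ < κ) :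
    (∀ τ : ℝ, 0 < τ → BH κ ξ ρ 0 τ = 0 ∧ BH κ ξ ρ 1 τ = 0) ∧
      (∀ u ∈ Set.Ioo (0 : ℝ) 1, ∀ τ : ℝ, 0 < τ → BH κ ξ ρ u τ < 0) ∧
      (∀ u ∈ Set.Ioo (uMinusH κ ξ ρ) (uPlusH κ ξ ρ), u ∉ Set.Icc (0 : ℝ) 1 →
        StrictMonoOn (fun τ => BH κ ξ ρ u τ) (Set.Ioi 0)) ∧
      (∀ u ∈ Set.Ioo (uMinusH κ ξ ρ) (uPlusH κ ξ ρ),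
        Tendsto (fun τ => BH κ ξ ρ u τ) atTop (𝓝 ((κ - ρ * ξ * u - dH κ ξ ρ u) / ξ ^ 2)) ∧
        (κ - ρ * ξ * u - dH κ ξ ρ u) / ξ ^ 2 = VH κ θ ξ ρ u / (κ * θ)) ∧
      (∀ u ∈ Set.Ioo (uMinusH κ ξ ρ) (uPlusH κ ξ ρ),
        2 * betaT κ ξ t * VH κ θ ξ ρ u < κ * θ →
        ∀ τ : ℝ, 0 < τ → 2 * betaT κ ξ t * BH κ ξ ρ u τ < 1) := by
  have hρ2 : ρ ^ 2 < 1 := by nlinarith [hρ.1, hρ.2]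
  have hκθ : 0 < κ * θ := mul_pos hκ hθ
  have hQ := fun u (hu : u ∈ Ioo (uMinusH κ ξ ρ) (uPlusH κ ξ ρ)) =>
    radicand_pos_of_mem_Ioo hξ hρ2 hu
  refine ⟨fun τ _ => ⟨BH_zero hκ.le τ, BH_one hκρξ.le τ⟩,
    fun u hu τ hτ => BH_neg hκ hρ2 hκρξ hξ.ne' hu hτ,
    fun u hu hu01 =>
      strictMonoOn_BH hκ hρ2 hκρξ (hQ u hu) (mul_sq_mul_one_sub_neg hξ.ne' hu01),
    fun u hu => ⟨tendsto_BH_atTop (hQ u hu), ?_⟩,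
    fun u hu hV τ hτ => mul_BH_lt_one hκ hρ2 hκρξ (hQ u hu) ?_ hτ⟩
  · rw [VH_eq_mul, mul_div_cancel_left₀ _ hκθ.ne']
  · rw [VH_eq_mul] at hV
    exact (mul_lt_iff_lt_one_right hκθ).1 (by linarith)

/-- from the proof of Proposition 5.11 of the paper: for Heston parameters
with `κ > ρξ` and `t ≥ 0`: (a) `B(0,τ) = B(1,τ) = 0` for all `τ > 0`;
(b) `B(u,τ) < 0` for `u ∈ (0,1)` and `τ > 0`;
(c) for `u ∈ (u₋, u₊)` with `u ∉ [0,1]`, `τ ↦ B(u,τ)` is strictly increasing on `(0,∞)`;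
(d) for `u ∈ (u₋, u₊)`, `B(u,τ) → (κ − ρξu − d(u))/ξ² = V(u)/(κθ)` as `τ → ∞`; consequently,
for every `u ∈ (u₋, u₊)` with `2β_t V(u) < κθ`, `2β_t B(u,τ) < 1` for all `τ > 0`. -/
theorem statement19 (v κ θ ξ ρ t : ℝ) (hv : 0 < v) (hκ : 0 < κ) (hθ : 0 < θ) (hξ : 0 < ξ)
    (hρ : ρ ∈ Set.Ioo (-1 : ℝ) 1) (hκρξ : ρ * ξ < κ) (ht : 0 ≤ t) :
    (∀ τ : ℝ, 0 < τ → BH κ ξ ρ 0 τ = 0 ∧ BH κ ξ ρ 1 τ = 0) ∧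
      (∀ u ∈ Set.Ioo (0 : ℝ) 1, ∀ τ : ℝ, 0 < τ → BH κ ξ ρ u τ < 0) ∧
      (∀ u ∈ Set.Ioo (uMinusH κ ξ ρ) (uPlusH κ ξ ρ), u ∉ Set.Icc (0 : ℝ) 1 →
        StrictMonoOn (fun τ => BH κ ξ ρ u τ) (Set.Ioi 0)) ∧
      (∀ u ∈ Set.Ioo (uMinusH κ ξ ρ) (uPlusH κ ξ ρ),
        Tendsto (fun τ => BH κ ξ ρ u τ) atTop (𝓝 ((κ - ρ * ξ * u - dH κ ξ ρ u) / ξ ^ 2)) ∧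
        (κ - ρ * ξ * u - dH κ ξ ρ u) / ξ ^ 2 = VH κ θ ξ ρ u / (κ * θ)) ∧
      (∀ u ∈ Set.Ioo (uMinusH κ ξ ρ) (uPlusH κ ξ ρ),
        2 * betaT κ ξ t * VH κ θ ξ ρ u < κ * θ →
        ∀ τ : ℝ, 0 < τ → 2 * betaT κ ξ t * BH κ ξ ρ u τ < 1) :=
  statement19_general κ θ ξ ρ t hκ hθ hξ hρ hκρξ
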